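/- Let J : ℝ → ℝ be C² with bounded second derivative on a compact neighborhood of x₀, and set f₁ = sin∘J, f₂ = cos∘J. Let x₄ be the result of the four Euler steps with step √h: x₁ = x₀ + √h f₁(x₀), x₂ = x₁ + √h f₂(x₁), x₃ = x₂ − √h f₁(x₂), x₄ = x₃ − √h f₂(x₃). Then there exist K, h̄ > 0 such that for all h ∈ (0, h̄): |x₄ − (x₀ − h J′(x₀))| ≤ K h^{3/2}. -/

import Mathlib

/-!
Expanding each Euler step to second order in the step `s`, the loop
`g₁, g₂, -g₁, -g₂` moves `x₀` by `s² (g₁ g₂' - g₂ g₁' - g₁ g₁' - g₂ g₂')(x₀) + O(s³)`; the errors are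
`s` times first-order Taylor remainders, which are `O(s²)` since all intermediate points stay
within `O(s)` of `x₀`. For `g₁ = sin ∘ J`, `g₂ = cos ∘ J` the coefficient collapses to `-J'(x₀)`
because `sin² + cos² = 1`, and `s = √h` turns this into the claim.
-/

open Filter Topology Asymptotics

theorem taylor_remainder_one_isBigO_sq {g : ℝ → ℝ} {x₀ : ℝ} (hg : Differentiable ℝ g)
    (hg' : DifferentiableAt ℝ (deriv g) x₀) :
    (fun x => g x - g x₀ - deriv g x₀ * (x - x₀)) =O[𝓝 x₀] fun x => (x - x₀) ^ 2 := by
  set c := deriv (deriv g) x₀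
  -- Subtracting the second-order term leaves a function whose derivative is `o(x - x₀)`.
  have hderiv : ∀ x ∈ Set.univ, HasDerivWithinAt
      (fun x => g x - deriv g x₀ * (x - x₀) - c / 2 * (x - x₀) ^ 2)
      (deriv g x - deriv g x₀ - c * (x - x₀)) Set.univ x := fun x _ => by
    have hlin : HasDerivAt (fun x => x - x₀) 1 x := (hasDerivAt_id' x).sub_const x₀
    refine HasDerivAt.hasDerivWithinAt ?_
    exact (((hg x).hasDerivAt.sub (hlin.const_mul (deriv g x₀))).sub
      ((hlin.pow 2).const_mul (c / 2))).congr_deriv (by ring)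
  have hsmall : (fun x => deriv g x - deriv g x₀ - c * (x - x₀)) =o[𝓝[Set.univ] x₀]
      fun x => (x - x₀) ^ 1 := by
    simpa [mul_comm] using hasDerivAt_iff_isLittleO.mp hg'.hasDerivAt
  have hr := Convex.isLittleO_pow_succ_real convex_univ (Set.mem_univ x₀) hderiv hsmall
  rw [nhdsWithin_univ] at hr
  exact (hr.isBigO.add (isBigO_const_mul_self (c / 2) _ _)).congr_left fun x => by
    simp only [sub_self, mul_zero, sub_zero, ne_eq, OfNat.ofNat_ne_zero, not_false_eq_true, zero_pow,
      Nat.reduceAdd]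
    ring

section Displacement

variable {g x : ℝ → ℝ} {x₀ : ℝ}

theorem tendsto_of_sub_isBigO_id (hx : (fun s => x s - x₀) =O[𝓝 0] id) :
    Tendsto x (𝓝 0) (𝓝 x₀) :=
  tendsto_sub_nhds_zero_iff.mp (hx.trans_tendsto tendsto_id)

theorem mul_comp_isBigO_id (hg : ContinuousAt g x₀) (hx : (fun s => x s - x₀) =O[𝓝 0] id) :
    (fun s => s * g (x s)) =O[𝓝 0] id := by
  have hbdd := (hg.tendsto.comp (tendsto_of_sub_isBigO_id hx)).isBigO_one ℝ
  exact ((isBigO_refl id _).mul hbdd).congr_right fun _ => mul_one _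

theorem sub_comp_isBigO_id (hg : DifferentiableAt ℝ g x₀) (hx : (fun s => x s - x₀) =O[𝓝 0] id) :
    (fun s => g (x s) - g x₀) =O[𝓝 0] id :=
  (hg.hasDerivAt.isBigO_sub.comp_tendsto (tendsto_of_sub_isBigO_id hx)).trans hx

theorem taylor_remainder_comp_isBigO_sq (hg : Differentiable ℝ g)
    (hg' : DifferentiableAt ℝ (deriv g) x₀) (hx : (fun s => x s - x₀) =O[𝓝 0] id) :
    (fun s => g (x s) - g x₀ - deriv g x₀ * (x s - x₀)) =O[𝓝 0] fun s => s ^ 2 :=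
  ((taylor_remainder_one_isBigO_sq hg hg').comp_tendsto (tendsto_of_sub_isBigO_id hx)).trans
    (hx.pow 2)

end Displacement

noncomputable def eulerLoop (g₁ g₂ : ℝ → ℝ) (s x₀ : ℝ) : ℝ :=
  let x₁ := x₀ + s * g₁ x₀
  let x₂ := x₁ + s * g₂ x₁
  let x₃ := x₂ - s * g₁ x₂
  x₃ - s * g₂ x₃

/-- `g₁ g₂' - g₂ g₁'` is the Lie bracket term; `-(g₁ g₁' + g₂ g₂') = -(g₁² + g₂²)' / 2` is the
drift of the Euler scheme, which vanishes when `g₁² + g₂²` is constant. -/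
noncomputable def eulerLoopCoeff (g₁ g₂ : ℝ → ℝ) (x₀ : ℝ) : ℝ :=
  g₁ x₀ * (deriv g₂ x₀ - deriv g₁ x₀) - g₂ x₀ * (deriv g₁ x₀ + deriv g₂ x₀)

theorem eulerLoop_sub_isBigO_cube {g₁ g₂ : ℝ → ℝ} {x₀ : ℝ}
    (hg₁ : Differentiable ℝ g₁) (hg₂ : Differentiable ℝ g₂)
    (hg₁' : DifferentiableAt ℝ (deriv g₁) x₀) (hg₂' : DifferentiableAt ℝ (deriv g₂) x₀) :
    (fun s => eulerLoop g₁ g₂ s x₀ - (x₀ + s ^ 2 * eulerLoopCoeff g₁ g₂ x₀))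
      =O[𝓝 0] fun s => s ^ 3 := by
  set x₁ : ℝ → ℝ := fun s => x₀ + s * g₁ x₀
  set x₂ : ℝ → ℝ := fun s => x₁ s + s * g₂ (x₁ s)
  set x₃ : ℝ → ℝ := fun s => x₂ s - s * g₁ (x₂ s)
  have hx₁ : (fun s => x₁ s - x₀) =O[𝓝 0] id :=
    ((isBigO_refl id _).const_mul_left (g₁ x₀)).congr_left fun s => by simp only [x₁, id]; ring
  have hx₂ : (fun s => x₂ s - x₀) =O[𝓝 0] id :=
    (hx₁.add (mul_comp_isBigO_id (hg₂ x₀).continuousAt hx₁)).congr_left fun s => by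
      simp only [x₂]; ring
  have hx₃ : (fun s => x₃ s - x₀) =O[𝓝 0] id :=
    (hx₂.sub (mul_comp_isBigO_id (hg₁ x₀).continuousAt hx₂)).congr_left fun s => by
      simp only [x₃]; ring
  -- The loop error is `s` times the Taylor remainders at `x₁, x₂, x₃` plus `s²` times
  -- first-order increments of `g₁, g₂`.
  have hsecond := ((taylor_remainder_comp_isBigO_sq hg₂ hg₂' hx₁).sub
    (taylor_remainder_comp_isBigO_sq hg₁ hg₁' hx₂)).sub
    (taylor_remainder_comp_isBigO_sq hg₂ hg₂' hx₃)
  have hfirst := ((sub_comp_isBigO_id (hg₁ x₀) hx₂).const_mul_left (deriv g₂ x₀)).sub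
    ((sub_comp_isBigO_id (hg₂ x₀) hx₁).const_mul_left (deriv g₁ x₀ + deriv g₂ x₀))
  refine ((((isBigO_refl id _).mul hsecond).congr_right fun s => ?_).add
    (((isBigO_refl (fun s : ℝ => s ^ 2) _).mul hfirst).congr_right fun s => ?_)).congr_left
    fun s => ?_
  · simp only [id]; ring
  · simp only [id]; ring
  · simp only [eulerLoop, eulerLoopCoeff, x₃, x₂, x₁, id]
    ring

theorem eulerLoopCoeff_sin_cos {J : ℝ → ℝ} {x₀ : ℝ} (hJ : DifferentiableAt ℝ J x₀) :
    eulerLoopCoeff (fun x => Real.sin (J x)) (fun x => Real.cos (J x)) x₀ = -deriv J x₀ := by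
  have hsin := ((Real.hasDerivAt_sin (J x₀)).comp x₀ hJ.hasDerivAt).deriv
  have hcos := ((Real.hasDerivAt_cos (J x₀)).comp x₀ hJ.hasDerivAt).deriv
  simp only [Function.comp_def] at hsin hcos
  rw [eulerLoopCoeff, hsin, hcos]
  linear_combination (-deriv J x₀) * Real.sin_sq_add_cos_sq (J x₀)

theorem exists_bound_sqrt_of_isBigO_cube {φ : ℝ → ℝ} (hφ : φ =O[𝓝 0] fun s => s ^ 3) :
    ∃ K ε : ℝ, 0 < K ∧ 0 < ε ∧ ∀ h : ℝ, 0 < h → h < ε → |φ √h| ≤ K * h ^ ((3 : ℝ) / 2) := by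
  obtain ⟨K, hK, hφK⟩ := hφ.exists_pos
  obtain ⟨δ, hδ, hbound⟩ := Metric.eventually_nhds_iff.mp hφK.bound
  refine ⟨K, δ ^ 2, hK, by positivity, fun h hh hhδ => ?_⟩
  have hsqrt : dist √h 0 < δ := by
    rwa [Real.dist_eq, sub_zero, abs_of_nonneg (Real.sqrt_nonneg h), Real.sqrt_lt' hδ]
  have hpow : √h ^ 3 = h ^ ((3 : ℝ) / 2) := by
    rw [Real.sqrt_eq_rpow, ← Real.rpow_natCast, ← Real.rpow_mul hh.le]
    norm_num
  simpa [abs_of_nonneg (Real.sqrt_nonneg h), hpow, abs_of_nonneg (Real.rpow_nonneg hh.le _)]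
    using hbound hsqrt

theorem stmt_5 (J : ℝ → ℝ) (hJ : ContDiff ℝ 2 J) (x₀ : ℝ)
    (f₁ f₂ : ℝ → ℝ) (hf₁ : ∀ x, f₁ x = Real.sin (J x)) (hf₂ : ∀ x, f₂ x = Real.cos (J x)) :
    ∃ K h' : ℝ, 0 < K ∧ 0 < h' ∧ ∀ h : ℝ, 0 < h → h < h' →
      let s := Real.sqrt h
      let x₁ := x₀ + s * f₁ x₀
      let x₂ := x₁ + s * f₂ x₁
      let x₃ := x₂ - s * f₁ x₂
      let x₄ := x₃ - s * f₂ x₃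
      |x₄ - (x₀ - h * deriv J x₀)| ≤ K * h ^ ((3:ℝ)/2) := by
  obtain rfl : f₁ = fun x => Real.sin (J x) := funext hf₁
  obtain rfl : f₂ = fun x => Real.cos (J x) := funext hf₂
  have hsin : ContDiff ℝ 2 fun x => Real.sin (J x) := Real.contDiff_sin.comp hJ
  have hcos : ContDiff ℝ 2 fun x => Real.cos (J x) := Real.contDiff_cos.comp hJ
  have hloop := eulerLoop_sub_isBigO_cube (x₀ := x₀) (hsin.differentiable two_ne_zero)
    (hcos.differentiable two_ne_zero) (hsin.differentiable_deriv_two x₀)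
    (hcos.differentiable_deriv_two x₀)
  rw [eulerLoopCoeff_sin_cos (hJ.differentiable two_ne_zero x₀)] at hloop
  obtain ⟨K, ε, hK, hε, hbound⟩ := exists_bound_sqrt_of_isBigO_cube hloop
  refine ⟨K, ε, hK, hε, fun h hh hhε => ?_⟩
  have := hbound h hh hhε
  rwa [Real.sq_sqrt hh.le, mul_neg, ← sub_eq_add_neg] at this
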